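/- Let m, k be natural numbers with 1 ≤ k ≤ m, let L_d : (ℝ^m)^6 → ℝ be continuously differentiable, let φ : ℤ × ℤ → ℝ^m be a discrete field, and for each (n, i) ∈ ℤ × ℤ let Φ^1_{(n,i)}, …, Φ^k_{(n,i)} ∈ ℝ^m be linearly independent vectors (the discrete reaction forces evaluated along φ). With c_{(n,i)}(φ) and E_{(n,i)}(φ) the discrete cell values and discrete Euler–Lagrange expression, the following are equivalent: (i) for every finitely supported δ : ℤ × ℤ → ℝ^m satisfying ⟨ δ(n, i), Φ^α_{(n,i)} ⟩ = 0 for all (n, i) and α = 1,…,k, one has Σ_{(n,i)} ⟨ δ(n, i), E_{(n,i)}(φ) ⟩ = 0; (ii) there exist functions λ_1, …, λ_k : ℤ × ℤ → ℝ such that E_{(n,i)}(φ) = Σ_{α=1}^{k} λ_α(n, i) Φ^α_{(n,i)} for all (n, i) ∈ ℤ × ℤ. -/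

import Mathlib

/-- The values of a discrete field on the 6-cell centered at `(n, i)`:
`((n, i−1), (n, i), (n, i+1), (n+1, i−1), (n+1, i), (n+1, i+1))`. -/
def cellVals {m : ℕ} (φ : ℤ × ℤ → Fin m → ℝ) (p : ℤ × ℤ) : Fin 6 → Fin m → ℝ :=
  ![φ (p.1, p.2 - 1), φ (p.1, p.2), φ (p.1, p.2 + 1),
    φ (p.1 + 1, p.2 - 1), φ (p.1 + 1, p.2), φ (p.1 + 1, p.2 + 1)]

/-- The partial gradient `D_j L_d ∈ ℝ^m` of a discrete Lagrangian with respect to its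
`j`-th slot. -/
noncomputable def Dslot {m : ℕ} (Ld : (Fin 6 → Fin m → ℝ) → ℝ) (j : Fin 6)
    (c : Fin 6 → Fin m → ℝ) (a : Fin m) : ℝ :=
  fderiv ℝ Ld c (Pi.single j (Pi.single a 1))

/-- The discrete Euler–Lagrange expression `E_{(n,i)}(φ)`. -/
noncomputable def discreteEL {m : ℕ} (Ld : (Fin 6 → Fin m → ℝ) → ℝ)
    (φ : ℤ × ℤ → Fin m → ℝ) (p : ℤ × ℤ) (a : Fin m) : ℝ :=
  Dslot Ld 0 (cellVals φ (p.1, p.2 + 1)) a + Dslot Ld 1 (cellVals φ (p.1, p.2)) a +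
    Dslot Ld 2 (cellVals φ (p.1, p.2 - 1)) a + Dslot Ld 3 (cellVals φ (p.1 - 1, p.2 + 1)) a +
    Dslot Ld 4 (cellVals φ (p.1 - 1, p.2)) a + Dslot Ld 5 (cellVals φ (p.1 - 1, p.2 - 1)) a

/-! Testing against a single site shows that (i) is a pointwise condition: at each site, `E`
annihilates every vector orthogonal to the reaction forces. In finite dimension the vectors with
this property are exactly the span of the reaction forces (the double annihilator of a subspace is
the subspace itself), which is (ii). -/

open Submodule Set

theorem forall_finsum_dotProduct_eq_zero_iff {X ι n R : Type*} [NonUnitalNonAssocSemiring R]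
    [Fintype n] (E : X → n → R) (Φ : ι → X → n → R) :
    (∀ δ : X → n → R, (Function.support δ).Finite → (∀ p α, δ p ⬝ᵥ Φ α p = 0) →
        ∑ᶠ p, δ p ⬝ᵥ E p = 0) ↔
      ∀ p, ∀ w : n → R, (∀ α, w ⬝ᵥ Φ α p = 0) → w ⬝ᵥ E p = 0 := by
  classical
  refine ⟨fun h p w hw => ?_, fun h δ _ hδ => finsum_eq_zero_of_forall_eq_zero fun p =>
    h p (δ p) (hδ p)⟩
  have hsingle := h (Pi.single p w) ((finite_singleton p).subset Pi.support_single_subset)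
    fun q α => by
      rcases eq_or_ne q p with rfl | hqp
      · simpa using hw α
      · simp [hqp]
  rwa [finsum_eq_single _ p fun q hqp => by simp [hqp], Pi.single_eq_same] at hsingle

theorem forall_dotProduct_eq_zero_imp_iff_mem_span_range {ι n K : Type*} [Field K] [Fintype n]
    (Φ : ι → n → K) (v : n → K) :
    (∀ w : n → K, (∀ α, w ⬝ᵥ Φ α = 0) → w ⬝ᵥ v = 0) ↔ v ∈ span K (range Φ) := by
  classical
  rw [← Subspace.forall_mem_dualAnnihilator_apply_eq_zero_iff]
  refine ⟨fun h f hf => ?_, fun h w hw => h (dotProductEquiv K n w) ?_⟩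
  · obtain ⟨w, rfl⟩ := (dotProductEquiv K n).surjective f
    exact h w fun α => (mem_dualAnnihilator _).1 hf (Φ α) (subset_span ⟨α, rfl⟩)
  · rw [mem_dualAnnihilator]
    intro u hu
    refine (span_le (p := LinearMap.ker (dotProductEquiv K n w))).2 ?_ hu
    rintro _ ⟨α, rfl⟩
    exact hw α

theorem mem_span_range_iff_exists_forall_eq_sum_mul {ι n R : Type*} [Semiring R] [Fintype ι]
    (Φ : ι → n → R) (v : n → R) :
    v ∈ span R (range Φ) ↔ ∃ c : ι → R, ∀ a, v a = ∑ α, c α * Φ α a := by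
  simp only [mem_span_range_iff_exists_fun, funext_iff, Finset.sum_apply, Pi.smul_apply,
    smul_eq_mul, eq_comm]

theorem discrete_dAlembert_principle (m k : ℕ)
    (Ld : (Fin 6 → Fin m → ℝ) → ℝ)
    (φ : ℤ × ℤ → Fin m → ℝ)
    (Φ : Fin k → ℤ × ℤ → Fin m → ℝ) :
    ((∀ δ : ℤ × ℤ → Fin m → ℝ, (Function.support δ).Finite →
        (∀ p : ℤ × ℤ, ∀ α : Fin k, ∑ a, δ p a * Φ α p a = 0) →
        (∑ᶠ p : ℤ × ℤ, ∑ a, δ p a * discreteEL Ld φ p a) = 0)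
      ↔ (∃ lam : Fin k → ℤ × ℤ → ℝ,
          ∀ p : ℤ × ℤ, ∀ a, discreteEL Ld φ p a = ∑ α : Fin k, lam α p * Φ α p a)) := by
  calc _ ↔ ∀ p, ∀ w, (∀ α, w ⬝ᵥ Φ α p = 0) → w ⬝ᵥ discreteEL Ld φ p = 0 :=
        forall_finsum_dotProduct_eq_zero_iff (discreteEL Ld φ) Φ
    _ ↔ ∀ p, ∃ c : Fin k → ℝ, ∀ a, discreteEL Ld φ p a = ∑ α, c α * Φ α p a := by
        simp only [forall_dotProduct_eq_zero_imp_iff_mem_span_range,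
          mem_span_range_iff_exists_forall_eq_sum_mul]
    _ ↔ _ := ⟨fun h => by choose c hc using h; exact ⟨fun α p => c p α, hc⟩,
        fun ⟨lam, hlam⟩ p => ⟨fun α => lam α p, hlam p⟩⟩
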